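/- arXiv:1910.09337 — 2 statements merged into one kernel-verified Lean document; each statement's English description precedes it below -/
import Mathlib

section
/- If for every (u,i) ∈ D either the propensity is accurate (p̂_{u,i} = p_{u,i}) or the imputed error is accurate (ê_{u,i} = e_{u,i}), then the doubly robust estimator E^DR = (1/|D|) Σ_{(u,i)∈D} ( ê_{u,i} + o_{u,i}(e_{u,i} − ê_{u,i})/p̂_{u,i} ) is unbiased: E_O[E^DR] = (1/|D|) Σ_{(u,i)∈D} e_{u,i}. -/
/-!
By linearity of the expectation it suffices to treat a single entry `d`. Since `o d` is Bernoulli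
with mean `p d`, the entry's expected value is `ê + p (e - ê) / p̂`, and this equals `e` as soon as
either `p̂ = p` or `ê = e`.
-/

open Finset

/-- Expectation over independent Bernoulli observation indicators. -/
noncomputable def expVal {D : Type*} [Fintype D] [DecidableEq D] (p : D → ℝ) (f : (D → Bool) → ℝ) : ℝ :=
  ∑ o : D → Bool, (∏ d, if o d then p d else 1 - p d) * f o

section expVal

variable {D : Type*} [Fintype D] [DecidableEq D] (p : D → ℝ)

lemma expVal_const_mul (c : ℝ) (f : (D → Bool) → ℝ) :
    expVal p (fun o => c * f o) = c * expVal p f := by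
  simp only [expVal, mul_sum]
  exact sum_congr rfl fun o _ => by ring

lemma expVal_sum {ι : Type*} (s : Finset ι) (f : ι → (D → Bool) → ℝ) :
    expVal p (fun o => ∑ i ∈ s, f i o) = ∑ i ∈ s, expVal p (f i) := by
  simp only [expVal, mul_sum]
  exact sum_comm

/-- The sum over `o` factors into a product over `d`, whose factors other than the `d₀`-th are
`p d + (1 - p d) = 1`. -/
lemma expVal_comp_eval (d₀ : D) (g : Bool → ℝ) :
    expVal p (fun o => g (o d₀)) = p d₀ * g true + (1 - p d₀) * g false := by
  have factor (o : D → Bool) : (∏ d, if o d then p d else 1 - p d) * g (o d₀) =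
      ∏ d, (if o d then p d else 1 - p d) * (if d = d₀ then g (o d) else 1) := by
    rw [prod_mul_distrib, prod_ite_eq' univ d₀ fun d => g (o d), if_pos (mem_univ d₀)]
  simp only [expVal, factor, ← Fintype.prod_sum (fun d b =>
    (if b then p d else 1 - p d) * (if d = d₀ then g b else 1)), Fintype.sum_bool]
  rw [prod_eq_single d₀ (fun d _ hd => by simp [hd]) (by simp)]
  simp

lemma expVal_add_indicator_mul (d₀ : D) (a b : ℝ) :
    expVal p (fun o => a + (if o d₀ then (1 : ℝ) else 0) * b) = a + p d₀ * b := by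
  rw [expVal_comp_eval p d₀ fun x => a + (if x then (1 : ℝ) else 0) * b]
  simp only [if_true, Bool.false_eq_true, if_false]
  ring

end expVal

lemma add_mul_sub_div_eq_of_or {e ehat p phat : ℝ} (hphat : phat ≠ 0)
    (h : phat = p ∨ ehat = e) : ehat + p * (e - ehat) / phat = e := by
  rcases h with rfl | rfl
  · field_simp
    ring
  · ring

theorem dr_unbiased_general {D : Type*} [Fintype D] [DecidableEq D]
    (e ehat p phat : D → ℝ)
    (hphat : ∀ d, 0 < phat d)
    (hacc : ∀ d, phat d = p d ∨ ehat d = e d) :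
    expVal p (fun o => (Fintype.card D : ℝ)⁻¹ *
        ∑ d, (ehat d + (if o d then (1 : ℝ) else 0) * (e d - ehat d) / phat d))
      = (Fintype.card D : ℝ)⁻¹ * ∑ d, e d := by
  rw [expVal_const_mul, expVal_sum]
  congr 1
  refine sum_congr rfl fun d _ => ?_
  simp_rw [mul_div_assoc, expVal_add_indicator_mul, ← mul_div_assoc]
  exact add_mul_sub_div_eq_of_or (hphat d).ne' (hacc d)

/-- If for every entry either the propensity or the imputed error is accurate,
the doubly robust estimator is unbiased. -/
theorem dr_unbiased {D : Type*} [Fintype D] [DecidableEq D] [Nonempty D]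
    (e ehat p phat : D → ℝ)
    (hp : ∀ d, 0 < p d ∧ p d ≤ 1) (hphat : ∀ d, 0 < phat d)
    (hacc : ∀ d, phat d = p d ∨ ehat d = e d) :
    expVal p (fun o => (Fintype.card D : ℝ)⁻¹ *
        ∑ d, (ehat d + (if o d then (1 : ℝ) else 0) * (e d - ehat d) / phat d))
      = (Fintype.card D : ℝ)⁻¹ * ∑ d, e d :=
  dr_unbiased_general e ehat p phat hphat hacc
end

section
/- If the imputed errors satisfy 0 ≤ ê_{u,i} ≤ 2 e_{u,i} for all (u,i), then the per-entry bias contribution of the doubly robust estimator is no larger than that of the IPW estimator: for each (u,i), |p_{u,i} − p̂_{u,i}| · |e_{u,i} − ê_{u,i}| / p̂_{u,i} ≤ |p_{u,i} − p̂_{u,i}| · e_{u,i} / p̂_{u,i}; consequently the DR bias bound (1/|D|) Σ |Δ_{u,i} δ_{u,i}| is at most the IPW bias bound (1/|D|) Σ |Δ_{u,i}| e_{u,i}. -/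
open Finset

theorem abs_sub_le_of_nonneg_of_le_two_mul {α : Type*} [Field α] [LinearOrder α]
    [IsStrictOrderedRing α] {a b : α} (hb : 0 ≤ b) (hba : b ≤ 2 * a) : |a - b| ≤ a :=
  abs_le.2 ⟨by linarith, by linarith⟩

theorem dr_bias_le_ipw_bias_general {D : Type*} [Fintype D]
    (e ehat p phat : D → ℝ)
    (hehat : ∀ d, 0 ≤ ehat d ∧ ehat d ≤ 2 * e d)
    (hphat : ∀ d, 0 < phat d) :
    (∀ d, |p d - phat d| * |e d - ehat d| / phat d ≤ |p d - phat d| * e d / phat d) ∧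
    (Fintype.card D : ℝ)⁻¹ * ∑ d, |((p d - phat d) / phat d) * (e d - ehat d)|
      ≤ (Fintype.card D : ℝ)⁻¹ * ∑ d, |(p d - phat d) / phat d| * e d := by
  have dr_error_le d : |e d - ehat d| ≤ e d :=
    abs_sub_le_of_nonneg_of_le_two_mul (hehat d).1 (hehat d).2
  refine ⟨fun d => ?_, ?_⟩
  · have := (hphat d).le
    gcongr
    exact dr_error_le d
  · gcongr with d
    rw [abs_mul]
    gcongr
    exact dr_error_le d

/-- If `0 ≤ ê ≤ 2e`, the per-entry DR bias contribution is no larger than the IPW one,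
and consequently the DR bias bound is at most the IPW bias bound. -/
theorem dr_bias_le_ipw_bias {D : Type*} [Fintype D] [Nonempty D]
    (e ehat p phat : D → ℝ)
    (he : ∀ d, 0 ≤ e d) (hehat : ∀ d, 0 ≤ ehat d ∧ ehat d ≤ 2 * e d)
    (hp : ∀ d, 0 < p d ∧ p d ≤ 1) (hphat : ∀ d, 0 < phat d) :
    (∀ d, |p d - phat d| * |e d - ehat d| / phat d ≤ |p d - phat d| * e d / phat d) ∧
    (Fintype.card D : ℝ)⁻¹ * ∑ d, |((p d - phat d) / phat d) * (e d - ehat d)|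
      ≤ (Fintype.card D : ℝ)⁻¹ * ∑ d, |(p d - phat d) / phat d| * e d :=
  dr_bias_le_ipw_bias_general e ehat p phat hehat hphat
end
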